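/- For any odd positive integers w1, w2, w3, any complex number y1, and any nonnegative integer n: (w1 w2)^n Σ_{a=0}^{w1 d − 1} Σ_{b=0}^{w2 d − 1} (−1)^{a+b} χ(a) χ(b) E_{n,χ}(w3 y1 + (w3/w1) a + (w3/w2) b) = (w2 w3)^n Σ_{a=0}^{w2 d − 1} Σ_{b=0}^{w3 d − 1} (−1)^{a+b} χ(a) χ(b) E_{n,χ}(w1 y1 + (w1/w2) a + (w1/w3) b) = (w3 w1)^n Σ_{a=0}^{w3 d − 1} Σ_{b=0}^{w1 d − 1} (−1)^{a+b} χ(a) χ(b) E_{n,χ}(w2 y1 + (w2/w3) a + (w2/w1) b). -/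

import Mathlib

open Finset

/-- The formal exponential power series `e^{ct} = Σ cⁿ tⁿ/n!` in `ℂ[[t]]`. -/
noncomputable def expPS (c : ℂ) : PowerSeries ℂ :=
  PowerSeries.mk fun n => c ^ n / n.factorial

/-- `Σ_{a=0}^{d-1} (-1)^a χ(a) e^{at}` as a formal power series. -/
noncomputable def altSum (χ : ℤ → ℂ) (d : ℕ) : PowerSeries ℂ :=
  ∑ a ∈ Finset.range d, ((-1 : ℂ) ^ a * χ (a : ℤ)) • expPS (a : ℂ)

/-- `E` is the family of generalized Euler polynomials attached to `χ` mod `d`: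
`(Σ_{n≥0} E_{n,χ}(x) tⁿ/n!) · (e^{dt}+1) = 2 e^{xt} · Σ_{a=0}^{d-1} (-1)^a χ(a) e^{at}`. -/
def IsGenEuler (d : ℕ) (χ : ℤ → ℂ) (E : ℕ → ℂ → ℂ) : Prop :=
  ∀ x : ℂ, (PowerSeries.mk fun n => E n x / n.factorial) * (expPS (d : ℂ) + 1)
    = (2 : PowerSeries ℂ) * expPS x * altSum χ d

/-- The alternating generalized power sum `T_k(n,χ) = Σ_{a=0}^{n} (-1)^a χ(a) a^k`
(with the convention `0^0 = 1`). -/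
noncomputable def altPowSum (χ : ℤ → ℂ) (k n : ℕ) : ℂ :=
  ∑ a ∈ Finset.range (n + 1), (-1 : ℂ) ^ a * χ (a : ℤ) * (a : ℂ) ^ k

/-- The multinomial coefficient `(k+l+m)! / (k! l! m!)`. -/
def multinom (k l m : ℕ) : ℕ :=
  (k + l + m).factorial / (k.factorial * l.factorial * m.factorial)

/-! The exponential generating function of the double sum, multiplied by
`(e^{uvdt}+1)(e^{vwdt}+1)(e^{wudt}+1)`, equals
`2 e^{uvwyt} A(uvt) A(vwt) A(wut) (e^{uvwdt}+1)²`, where `A(t) = Σ_{a<d} (-1)^a χ(a) e^{at}`.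
This expression is invariant under cyclic permutations of `(u, v, w)`, and the factor we
multiplied by is a non-zero-divisor, so the generating functions, hence their coefficients, agree.
The key input: for odd `m` and `χ` of period `d`, the alternating sum over `a < md` is a
geometric sum in `-e^{cdt}` times `A(ct)`, so multiplying it by `e^{cdt}+1` gives
`A(ct)(e^{mcdt}+1)`. -/

open PowerSeries Nat

lemma expPS_eq_rescale_exp (c : ℂ) : expPS c = rescale c (exp ℂ) := by
  ext n
  simp [expPS, coeff_exp, div_eq_mul_inv]

lemma expPS_add (a b : ℂ) : expPS (a + b) = expPS a * expPS b := by
  simp only [expPS_eq_rescale_exp, exp_mul_exp_eq_exp_add]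

lemma rescale_expPS (a c : ℂ) : rescale a (expPS c) = expPS (a * c) := by
  rw [expPS_eq_rescale_exp, expPS_eq_rescale_exp, rescale_rescale, mul_comm]

lemma expPS_pow (c : ℂ) (m : ℕ) : expPS c ^ m = expPS (m * c) := by
  rw [expPS_eq_rescale_exp, ← map_pow, exp_pow_eq_rescale_exp, rescale_rescale,
    ← expPS_eq_rescale_exp]

lemma expPS_add_one_ne_zero (c : ℂ) : expPS c + 1 ≠ 0 := fun h => by
  simpa [expPS] using congrArg (coeff 0) h

noncomputable def twistedExpSum (χ : ℤ → ℂ) (N : ℕ) (c : ℂ) : PowerSeries ℂ :=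
  ∑ a ∈ range N, ((-1 : ℂ) ^ a * χ a) • expPS (c * a)

lemma rescale_altSum (χ : ℤ → ℂ) (d : ℕ) (c : ℂ) :
    rescale c (altSum χ d) = twistedExpSum χ d c := by
  ext n
  simp only [altSum, twistedExpSum, coeff_rescale, map_sum, map_smul, expPS, coeff_mk,
    smul_eq_mul, mul_pow]
  exact sum_congr rfl fun a _ => by ring

section Periodic

variable {χ : ℤ → ℂ} {d : ℕ} (hd : Odd d) (hχ : Function.Periodic χ d)
include hd hχ

lemma twistedExpSum_mul_eq_geom_sum_mul (m : ℕ) (c : ℂ) :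
    twistedExpSum χ (m * d) c = (∑ j ∈ range m, (-expPS (c * d)) ^ j) * twistedExpSum χ d c := by
  induction m with
  | zero => simp [twistedExpSum]
  | succ m ih =>
    have hsplit : twistedExpSum χ ((m + 1) * d) c = twistedExpSum χ (m * d) c
        + ∑ r ∈ range d,
            ((-1 : ℂ) ^ (m * d + r) * χ (m * d + r : ℕ)) • expPS (c * (m * d + r : ℕ)) := by
      rw [twistedExpSum, twistedExpSum, Nat.succ_mul, Finset.sum_range_add]
    rw [hsplit, ih, sum_range_succ, add_mul]
    congr 1
    rw [twistedExpSum, Finset.mul_sum]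
    refine Finset.sum_congr rfl fun r _ => ?_
    have hχr : χ ((m * d + r : ℕ) : ℤ) = χ r := by
      simpa [add_comm] using hχ.nat_mul m r
    have hsign : (-1 : ℂ) ^ (m * d + r) = (-1) ^ m * (-1) ^ r := by
      rw [pow_add, mul_comm m d, pow_mul, hd.neg_one_pow]
    have hexp : expPS (c * (m * d + r : ℕ)) = expPS (c * d) ^ m * expPS (c * r) := by
      rw [expPS_pow, ← expPS_add]
      push_cast
      ring_nf
    rw [hχr, hsign, hexp, neg_pow, smul_eq_C_mul, smul_eq_C_mul]
    simp only [map_mul, map_pow, map_neg, map_one]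
    ring

lemma twistedExpSum_mul_expPS_add_one {m : ℕ} (hm : Odd m) (c : ℂ) :
    twistedExpSum χ (m * d) c * (expPS (c * d) + 1)
      = twistedExpSum χ d c * (expPS (m * (c * d)) + 1) := by
  have hgeom := geom_sum_mul (-expPS (c * d)) m
  rw [hm.neg_pow, expPS_pow] at hgeom
  rw [twistedExpSum_mul_eq_geom_sum_mul hd hχ, mul_right_comm, mul_comm]
  linear_combination (twistedExpSum χ d c) * (-hgeom)

end Periodic

lemma IsGenEuler.rescale {d : ℕ} {χ : ℤ → ℂ} {E : ℕ → ℂ → ℂ} (hE : IsGenEuler d χ E)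
    (c x : ℂ) :
    (mk fun n => c ^ n * (E n x / n !)) * (expPS (c * d) + 1)
      = 2 * expPS (c * x) * twistedExpSum χ d c := by
  simpa only [map_mul, map_add, map_one, map_ofNat, rescale_mk, rescale_expPS, rescale_altSum]
    using congrArg (PowerSeries.rescale c) (hE x)

noncomputable def eulerDoubleSum (d : ℕ) (χ : ℤ → ℂ) (E : ℕ → ℂ → ℂ) (u v w : ℕ) (y : ℂ)
    (n : ℕ) : ℂ :=
  ((u : ℂ) * v) ^ n * ∑ a ∈ range (u * d), ∑ b ∈ range (v * d),
    (-1 : ℂ) ^ (a + b) * χ a * χ b * E n (w * y + w / u * a + w / v * b)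

section DoubleSum

variable {d : ℕ} {χ : ℤ → ℂ} {E : ℕ → ℂ → ℂ}

lemma mk_eulerDoubleSum (u v w : ℕ) (y : ℂ) :
    (mk fun n => eulerDoubleSum d χ E u v w y n / n !)
      = ∑ a ∈ range (u * d), ∑ b ∈ range (v * d), ((-1 : ℂ) ^ (a + b) * χ a * χ b) •
          mk fun n => ((u : ℂ) * v) ^ n * (E n (w * y + w / u * a + w / v * b) / n !) := by
  ext n
  simp only [eulerDoubleSum, coeff_mk, map_sum, map_smul, smul_eq_mul, mul_div_assoc,
    Finset.sum_div, Finset.mul_sum]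
  exact Finset.sum_congr rfl fun a _ => Finset.sum_congr rfl fun b _ => by ring

variable (hE : IsGenEuler d χ E)
include hE

lemma mk_eulerDoubleSum_mul {u v : ℕ} (hu : u ≠ 0) (hv : v ≠ 0)
    (w : ℕ) (y : ℂ) :
    (mk fun n => eulerDoubleSum d χ E u v w y n / n !) * (expPS (u * v * d) + 1)
      = 2 * expPS (u * v * w * y) * twistedExpSum χ d (u * v)
          * twistedExpSum χ (u * d) (v * w) * twistedExpSum χ (v * d) (w * u) := by
  have harg : ∀ a b : ℕ, (u * v : ℂ) * (w * y + w / u * a + w / v * b)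
      = u * v * w * y + (v * w * a + w * u * b) := fun a b => by
    field_simp
    ring
  have hterm : ∀ a b : ℕ,
      (mk fun n => ((u : ℂ) * v) ^ n * (E n (w * y + w / u * a + w / v * b) / n !))
        * (expPS (u * v * d) + 1)
      = 2 * expPS (u * v * w * y) * twistedExpSum χ d (u * v)
          * (expPS (v * w * a) * expPS (w * u * b)) := fun a b => by
    rw [hE.rescale, harg, expPS_add, expPS_add]
    ring
  calc _ = ∑ a ∈ range (u * d), ∑ b ∈ range (v * d), ((-1 : ℂ) ^ (a + b) * χ a * χ b) •
        (2 * expPS (u * v * w * y) * twistedExpSum χ d (u * v)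
          * (expPS (v * w * a) * expPS (w * u * b))) := by
        simp only [mk_eulerDoubleSum, Finset.sum_mul, smul_mul_assoc, hterm]
    _ = 2 * expPS (u * v * w * y) * twistedExpSum χ d (u * v)
          * (twistedExpSum χ (u * d) (v * w) * twistedExpSum χ (v * d) (w * u)) := by
        rw [twistedExpSum.eq_1 χ (u * d), twistedExpSum.eq_1 χ (v * d), Finset.sum_mul_sum,
          Finset.mul_sum]
        refine Finset.sum_congr rfl fun a _ => ?_
        rw [Finset.mul_sum]
        refine Finset.sum_congr rfl fun b _ => ?_
        simp only [smul_eq_C_mul, pow_add, map_mul, map_pow]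
        ring
    _ = _ := by ring

variable (hd : Odd d) (hχ : Function.Periodic χ d)
include hd hχ

lemma mk_eulerDoubleSum_mul_symm {u v : ℕ} (hu : Odd u) (hv : Odd v) (w : ℕ) (y : ℂ) :
    (mk fun n => eulerDoubleSum d χ E u v w y n / n !)
      * ((expPS (u * v * d) + 1) * (expPS (v * w * d) + 1) * (expPS (w * u * d) + 1))
      = 2 * expPS (u * v * w * y) * twistedExpSum χ d (u * v) * twistedExpSum χ d (v * w)
          * twistedExpSum χ d (w * u) * (expPS (u * v * w * d) + 1) ^ 2 := by
  rw [← mul_assoc, ← mul_assoc, mk_eulerDoubleSum_mul hE hu.pos.ne' hv.pos.ne']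
  calc _ = 2 * expPS (u * v * w * y) * twistedExpSum χ d (u * v)
          * (twistedExpSum χ (u * d) (v * w) * (expPS (v * w * d) + 1))
          * (twistedExpSum χ (v * d) (w * u) * (expPS (w * u * d) + 1)) := by ring
    _ = 2 * expPS (u * v * w * y) * twistedExpSum χ d (u * v)
          * (twistedExpSum χ d (v * w) * (expPS (u * (v * w * d)) + 1))
          * (twistedExpSum χ d (w * u) * (expPS (v * (w * u * d)) + 1)) := by
        rw [twistedExpSum_mul_expPS_add_one hd hχ hu, twistedExpSum_mul_expPS_add_one hd hχ hv]
    _ = _ := by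
        rw [show (u * (v * w * d) : ℂ) = u * v * w * d by ring,
          show (v * (w * u * d) : ℂ) = u * v * w * d by ring]
        ring

lemma eulerDoubleSum_rotate {u v w : ℕ} (hu : Odd u) (hv : Odd v) (hw : Odd w) (y : ℂ) (n : ℕ) :
    eulerDoubleSum d χ E u v w y n = eulerDoubleSum d χ E v w u y n := by
  have h₁ := mk_eulerDoubleSum_mul_symm hE hd hχ hu hv w y
  have h₂ := mk_eulerDoubleSum_mul_symm hE hd hχ hv hw u y
  rw [← mul_rotate (u : ℂ)] at h₂
  set B := (expPS (u * v * d) + 1) * (expPS (v * w * d) + 1) * (expPS (w * u * d) + 1)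
  have hB : B ≠ 0 := mul_ne_zero (mul_ne_zero (expPS_add_one_ne_zero _)
    (expPS_add_one_ne_zero _)) (expPS_add_one_ne_zero _)
  have hmk : (mk fun n => eulerDoubleSum d χ E u v w y n / n !)
      = mk fun n => eulerDoubleSum d χ E v w u y n / n ! :=
    mul_right_cancel₀ hB (by linear_combination h₁ - h₂)
  have hfact : (n ! : ℂ) ≠ 0 := cast_ne_zero.mpr n.factorial_ne_zero
  simpa only [coeff_mk, div_left_inj' hfact] using congrArg (coeff n) hmk

end DoubleSum

theorem stmt_5_general (d : ℕ) (hd : Odd d) (χ : ℤ → ℂ)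
    (hper : ∀ a : ℤ, χ (a + d) = χ a)
    (E : ℕ → ℂ → ℂ) (hE : IsGenEuler d χ E)
    (w1 w2 w3 : ℕ)
    (hw1o : Odd w1) (hw2o : Odd w2) (hw3o : Odd w3)
    (y1 : ℂ) (n : ℕ) :
    (((w1 : ℂ) * w2) ^ n * ∑ a ∈ range (w1 * d), ∑ b ∈ range (w2 * d),
      (-1 : ℂ) ^ (a + b) * χ (a : ℤ) * χ (b : ℤ) *
        E n ((w3 : ℂ) * y1 + (w3 : ℂ) / (w1 : ℂ) * (a : ℂ) + (w3 : ℂ) / (w2 : ℂ) * (b : ℂ)))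
    = (((w2 : ℂ) * w3) ^ n * ∑ a ∈ range (w2 * d), ∑ b ∈ range (w3 * d),
      (-1 : ℂ) ^ (a + b) * χ (a : ℤ) * χ (b : ℤ) *
        E n ((w1 : ℂ) * y1 + (w1 : ℂ) / (w2 : ℂ) * (a : ℂ) + (w1 : ℂ) / (w3 : ℂ) * (b : ℂ)))
    ∧ (((w2 : ℂ) * w3) ^ n * ∑ a ∈ range (w2 * d), ∑ b ∈ range (w3 * d),
      (-1 : ℂ) ^ (a + b) * χ (a : ℤ) * χ (b : ℤ) *
        E n ((w1 : ℂ) * y1 + (w1 : ℂ) / (w2 : ℂ) * (a : ℂ) + (w1 : ℂ) / (w3 : ℂ) * (b : ℂ)))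
    = ((w3 : ℂ) * w1) ^ n * ∑ a ∈ range (w3 * d), ∑ b ∈ range (w1 * d),
      (-1 : ℂ) ^ (a + b) * χ (a : ℤ) * χ (b : ℤ) *
        E n ((w2 : ℂ) * y1 + (w2 : ℂ) / (w3 : ℂ) * (a : ℂ) + (w2 : ℂ) / (w1 : ℂ) * (b : ℂ)) :=
  ⟨eulerDoubleSum_rotate hE hd hper hw1o hw2o hw3o y1 n,
    eulerDoubleSum_rotate hE hd hper hw2o hw3o hw1o y1 n⟩

/-- Theorem 6: three cyclic symmetries for the double alternating sum of generalized
Euler polynomial values. -/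
theorem stmt_5 (d : ℕ) (hd : Odd d) (hd0 : 0 < d) (χ : ℤ → ℂ)
    (hper : ∀ a : ℤ, χ (a + d) = χ a)
    (hmul : ∀ a b : ℤ, χ (a * b) = χ a * χ b) (hone : χ 1 = 1)
    (hvan : ∀ a : ℤ, 1 < Int.gcd a d → χ a = 0)
    (E : ℕ → ℂ → ℂ) (hE : IsGenEuler d χ E)
    (w1 w2 w3 : ℕ) (hw1 : 0 < w1) (hw2 : 0 < w2) (hw3 : 0 < w3)
    (hw1o : Odd w1) (hw2o : Odd w2) (hw3o : Odd w3)
    (y1 : ℂ) (n : ℕ) :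
    (((w1 : ℂ) * w2) ^ n * ∑ a ∈ range (w1 * d), ∑ b ∈ range (w2 * d),
      (-1 : ℂ) ^ (a + b) * χ (a : ℤ) * χ (b : ℤ) *
        E n ((w3 : ℂ) * y1 + (w3 : ℂ) / (w1 : ℂ) * (a : ℂ) + (w3 : ℂ) / (w2 : ℂ) * (b : ℂ)))
    = (((w2 : ℂ) * w3) ^ n * ∑ a ∈ range (w2 * d), ∑ b ∈ range (w3 * d),
      (-1 : ℂ) ^ (a + b) * χ (a : ℤ) * χ (b : ℤ) *
        E n ((w1 : ℂ) * y1 + (w1 : ℂ) / (w2 : ℂ) * (a : ℂ) + (w1 : ℂ) / (w3 : ℂ) * (b : ℂ)))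
    ∧ (((w2 : ℂ) * w3) ^ n * ∑ a ∈ range (w2 * d), ∑ b ∈ range (w3 * d),
      (-1 : ℂ) ^ (a + b) * χ (a : ℤ) * χ (b : ℤ) *
        E n ((w1 : ℂ) * y1 + (w1 : ℂ) / (w2 : ℂ) * (a : ℂ) + (w1 : ℂ) / (w3 : ℂ) * (b : ℂ)))
    = ((w3 : ℂ) * w1) ^ n * ∑ a ∈ range (w3 * d), ∑ b ∈ range (w1 * d),
      (-1 : ℂ) ^ (a + b) * χ (a : ℤ) * χ (b : ℤ) *
        E n ((w2 : ℂ) * y1 + (w2 : ℂ) / (w3 : ℂ) * (a : ℂ) + (w2 : ℂ) / (w1 : ℂ) * (b : ℂ)) :=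
  stmt_5_general d hd χ hper E hE w1 w2 w3 hw1o hw2o hw3o y1 n
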